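/- arXiv:2005.03296 — 2 statements merged into one kernel-verified Lean document; each statement's English description precedes it below -/
import Mathlib

section
/- Let f ∈ L¹(ℝ) and w₀ ∈ ℂ with Im(w₀) ≠ 0, and let k ≥ 1 be an integer. Then there exists y₀ ∈ L¹(ℝ) such that F(y₀)(w) = F(f)(w)/(w - w₀)^k for all real w. -/
open MeasureTheory Complex Filter

noncomputable def fourierT (f : ℝ → ℂ) (w : ℝ) : ℂ :=
  ∫ t : ℝ, Complex.exp (-(Complex.I * w * t)) * f t

noncomputable def heaviside (t : ℝ) : ℂ := if 0 ≤ t then 1 else 0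

/-! For `Im w₀ ≠ 0` the function `1 / (w - w₀)` is itself the Fourier transform of an integrable
kernel: a multiple of `t ↦ exp (i w₀ t)` cut off to the half-line on which it decays (`t ≥ 0` if
`Im w₀ > 0`, `t ≤ 0` if `Im w₀ < 0`). Convolving with this kernel divides the Fourier transform by
`w - w₀` and preserves integrability; doing it `k` times gives the claim. -/

open Set FourierTransform Convolution

lemma fourierT_eq_fourier (f : ℝ → ℂ) (w : ℝ) : fourierT f w = 𝓕 f (w / (2 * Real.pi)) := by
  rw [Real.fourier_real_eq_integral_exp_smul, fourierT]
  congr 1 with t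
  rw [smul_eq_mul]
  congr 2
  push_cast
  field_simp

lemma fourierT_const_smul (c : ℂ) (f : ℝ → ℂ) (w : ℝ) :
    fourierT (c • f) w = c * fourierT f w := by
  simp only [fourierT, Pi.smul_apply, smul_eq_mul, mul_left_comm _ c, integral_const_mul]

lemma fourierT_mul_convolution {f g : ℝ → ℂ} (hf : Integrable f) (hg : Integrable g) (w : ℝ) :
    fourierT (f ⋆[ContinuousLinearMap.mul ℂ ℂ] g) w = fourierT f w * fourierT g w := by
  simp only [fourierT_eq_fourier]
  exact Real.fourier_mul_convolution_eq hf hg _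

lemma fourierT_indicator_cexp_mul {s : Set ℝ} (hs : MeasurableSet s) (a : ℂ) (w : ℝ) :
    fourierT (s.indicator fun t : ℝ => cexp (a * t)) w = ∫ t in s, cexp ((a - I * w) * t) := by
  have h : ∀ t : ℝ, cexp (-(I * w * t)) * s.indicator (fun t : ℝ => cexp (a * t)) t =
      s.indicator (fun t : ℝ => cexp ((a - I * w) * t)) t := fun t => by
    by_cases ht : t ∈ s
    · simp only [indicator_of_mem ht, ← Complex.exp_add]
      ring_nf
    · simp only [indicator_of_notMem ht, mul_zero]
  simp only [fourierT, h, integral_indicator hs]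

lemma fourierT_indicator_Ioi_cexp_mul {a : ℂ} (ha : a.re < 0) (w : ℝ) :
    fourierT ((Ioi 0).indicator fun t : ℝ => cexp (a * t)) w = -1 / (a - I * w) := by
  rw [fourierT_indicator_cexp_mul measurableSet_Ioi,
    integral_exp_mul_complex_Ioi (by simpa using ha)]
  simp

lemma fourierT_indicator_Iic_cexp_mul {a : ℂ} (ha : 0 < a.re) (w : ℝ) :
    fourierT ((Iic 0).indicator fun t : ℝ => cexp (a * t)) w = 1 / (a - I * w) := by
  rw [fourierT_indicator_cexp_mul measurableSet_Iic,
    integral_exp_mul_complex_Iic (by simpa using ha)]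
  simp

lemma exists_integrable_fourierT_eq_inv_sub {w₀ : ℂ} (hw₀ : w₀.im ≠ 0) :
    ∃ g : ℝ → ℂ, Integrable g ∧ ∀ w : ℝ, fourierT g w = 1 / ((w : ℂ) - w₀) := by
  have hsub : ∀ w : ℝ, I * w₀ - I * w = -I * ((w : ℂ) - w₀) := fun w => by ring
  rcases hw₀.lt_or_gt with hneg | hpos
  · refine ⟨-I • (Iic 0).indicator fun t : ℝ => cexp (I * w₀ * t), ?_, fun w => ?_⟩
    · exact ((integrableOn_exp_mul_complex_Iic (by simpa using hneg) 0).integrable_indicator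
        measurableSet_Iic).smul _
    · rw [fourierT_const_smul, fourierT_indicator_Iic_cexp_mul (by simpa using hneg), hsub]
      field_simp
  · refine ⟨I • (Ioi 0).indicator fun t : ℝ => cexp (I * w₀ * t), ?_, fun w => ?_⟩
    · exact ((integrableOn_exp_mul_complex_Ioi (by simpa using hpos) 0).integrable_indicator
        measurableSet_Ioi).smul _
    · rw [fourierT_const_smul, fourierT_indicator_Ioi_cexp_mul (by simpa using hpos), hsub]
      field_simp

lemma exists_integrable_fourierT_eq_div_sub {f : ℝ → ℂ} (hf : Integrable f) {w₀ : ℂ}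
    (hw₀ : w₀.im ≠ 0) :
    ∃ y : ℝ → ℂ, Integrable y ∧ ∀ w : ℝ, fourierT y w = fourierT f w / ((w : ℂ) - w₀) := by
  obtain ⟨g, hg, hFg⟩ := exists_integrable_fourierT_eq_inv_sub hw₀
  exact ⟨f ⋆[ContinuousLinearMap.mul ℂ ℂ] g, hf.integrable_convolution _ hg, fun w => by
    rw [fourierT_mul_convolution hf hg, hFg, mul_one_div]⟩

theorem stmt_3_general (f : ℝ → ℂ) (hf : Integrable f) (w₀ : ℂ) (hw₀ : w₀.im ≠ 0)
    (k : ℕ) :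
    ∃ y₀ : ℝ → ℂ, Integrable y₀ ∧
      ∀ w : ℝ, fourierT y₀ w = fourierT f w / ((w : ℂ) - w₀) ^ k := by
  induction k with
  | zero => exact ⟨f, hf, fun w => by simp⟩
  | succ k ih =>
    obtain ⟨y, hy, hFy⟩ := ih
    obtain ⟨y', hy', hFy'⟩ := exists_integrable_fourierT_eq_div_sub hy hw₀
    exact ⟨y', hy', fun w => by rw [hFy', hFy, div_div, ← pow_succ]⟩

theorem stmt_3 (f : ℝ → ℂ) (hf : Integrable f) (w₀ : ℂ) (hw₀ : w₀.im ≠ 0)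
    (k : ℕ) (hk : 1 ≤ k) :
    ∃ y₀ : ℝ → ℂ, Integrable y₀ ∧
      ∀ w : ℝ, fourierT y₀ w = fourierT f w / ((w : ℂ) - w₀) ^ k :=
  stmt_3_general f hf w₀ hw₀ k
end

section
/- Let f ∈ L¹(ℝ), w₀ ∈ ℝ, and define f₁(t) = e^{i w₀ t} · ∫_{-∞}^{t} f(x) e^{-i w₀ x} dx. If f₁ ∈ L¹(ℝ), then F(f₁)(w) = F(f)(w)/(i(w - w₀)) for all real w ≠ w₀. -/
/-!
Write `G t = ∫_{-∞}^t g`. For `a ≥ 0`, `G t - G (t - a) = ∫_0^a g (t - s) ds`; taking Fourier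
transforms (translation on the left, Fubini on the right) gives
`(1 - e^{-iξa}) F(G)(ξ) = F(g)(ξ) (1 - e^{-iξa}) / (iξ)`, and `a = π / |ξ|` makes the common
factor nonzero. The general case `w₀ ≠ 0` reduces to `w₀ = 0` by modulation.
-/

open MeasureTheory Complex Filter

open Set

lemma norm_cexp_neg_I_mul_mul (w t : ℝ) : ‖exp (-(I * w * t))‖ = 1 := by
  simp [Complex.norm_exp, Complex.mul_re]

lemma integrable_cexp_neg_I_mul_mul {α : Type*} [MeasurableSpace α] {μ : Measure α}
    {h : α → ℂ} (hh : Integrable h μ) {φ : α → ℝ} (hφ : AEMeasurable φ μ) (w : ℝ) :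
    Integrable (fun x => exp (-(I * w * φ x)) * h x) μ :=
  hh.bdd_mul (c := 1) (by fun_prop) (Eventually.of_forall fun _ => (norm_cexp_neg_I_mul_mul w _).le)

lemma fourierT_cexp_I_mul_mul (h : ℝ → ℂ) (a ξ : ℝ) :
    fourierT (fun t => exp (I * a * t) * h t) ξ = fourierT h (ξ - a) := by
  unfold fourierT
  congr 1 with t
  rw [← mul_assoc, ← Complex.exp_add]
  push_cast
  ring_nf

lemma fourierT_mul_cexp_neg_I_mul (h : ℝ → ℂ) (a ξ : ℝ) :
    fourierT (fun t => h t * exp (-(I * a * t))) ξ = fourierT h (ξ + a) := by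
  unfold fourierT
  congr 1 with t
  dsimp only
  rw [mul_comm (h t), ← mul_assoc, ← Complex.exp_add]
  push_cast
  ring_nf

lemma fourierT_comp_sub_right (h : ℝ → ℂ) (a ξ : ℝ) :
    fourierT (fun t => h (t - a)) ξ = exp (-(I * ξ * a)) * fourierT h ξ := by
  unfold fourierT
  rw [← integral_add_right_eq_self _ a, ← integral_const_mul]
  congr 1 with t
  dsimp only
  rw [add_sub_cancel_right, ← mul_assoc, ← Complex.exp_add]
  push_cast
  ring_nf

lemma fourierT_integral_comp_sub {g : ℝ → ℂ} (hg : Integrable g) (ν : Measure ℝ)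
    [IsFiniteMeasure ν] (ξ : ℝ) :
    fourierT (fun t => ∫ s, g (t - s) ∂ν) ξ = (∫ s, exp (-(I * ξ * s)) ∂ν) * fourierT g ξ := by
  have hconv : Integrable (fun p : ℝ × ℝ => g (p.1 - p.2)) (volume.prod ν) := by
    simpa using (integrable_const (1 : ℂ) : Integrable _ ν).convolution_integrand
      (ContinuousLinearMap.mul ℂ ℂ) hg
  calc fourierT (fun t => ∫ s, g (t - s) ∂ν) ξ
      = ∫ t : ℝ, ∫ s, exp (-(I * ξ * t)) * g (t - s) ∂ν := by
        simp only [fourierT, integral_const_mul]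
    _ = ∫ s, fourierT (fun t => g (t - s)) ξ ∂ν :=
        integral_integral_swap (integrable_cexp_neg_I_mul_mul hconv measurable_fst.aemeasurable ξ)
    _ = (∫ s, exp (-(I * ξ * s)) ∂ν) * fourierT g ξ := by
        simp only [fourierT_comp_sub_right, integral_mul_const]

lemma setIntegral_Iic_sub_setIntegral_Iic_sub {g : ℝ → ℂ} (hg : Integrable g) (t : ℝ)
    {a : ℝ} (ha : 0 ≤ a) :
    (∫ x in Iic t, g x) - ∫ x in Iic (t - a), g x = ∫ s in Ioc 0 a, g (t - s) := by
  rw [intervalIntegral.integral_Iic_sub_Iic hg.integrableOn hg.integrableOn,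
    ← intervalIntegral.integral_of_le ha, intervalIntegral.integral_comp_sub_left, sub_zero]

lemma setIntegral_Ioc_cexp_neg_I_mul {ξ : ℝ} (hξ : ξ ≠ 0) {a : ℝ} (ha : 0 ≤ a) :
    ∫ s in Ioc 0 a, exp (-(I * ξ * s)) = (1 - exp (-(I * ξ * a))) / (I * ξ) := by
  have hc : -I * ξ ≠ 0 := by simpa using hξ
  simp only [← neg_mul, ← intervalIntegral.integral_of_le ha, integral_exp_mul_complex hc,
    ofReal_zero, mul_zero, Complex.exp_zero]
  field_simp
  ring

lemma exists_cexp_neg_I_mul_ne_one {ξ : ℝ} (hξ : ξ ≠ 0) :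
    ∃ a : ℝ, 0 ≤ a ∧ exp (-(I * ξ * a)) ≠ 1 := by
  refine ⟨Real.pi / |ξ|, by positivity, fun h => ?_⟩
  have hre := congrArg Complex.re h
  have hcos : Real.cos (ξ * (Real.pi / |ξ|)) = -1 := by
    rw [← Real.cos_abs, abs_mul, abs_div, abs_abs, abs_of_pos Real.pi_pos,
      mul_div_cancel₀ _ (abs_ne_zero.2 hξ), Real.cos_pi]
  norm_num [Complex.exp_re, Complex.mul_re, hcos] at hre

theorem fourierT_setIntegral_Iic {g : ℝ → ℂ} (hg : Integrable g)
    (hG : Integrable fun t => ∫ x in Iic t, g x) {ξ : ℝ} (hξ : ξ ≠ 0) :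
    fourierT (fun t => ∫ x in Iic t, g x) ξ = fourierT g ξ / (I * ξ) := by
  set G := fun t => ∫ x in Iic t, g x
  obtain ⟨a, ha, hE⟩ := exists_cexp_neg_I_mul_ne_one hξ
  set E := exp (-(I * ξ * a))
  have key : (1 - E) * fourierT G ξ = (1 - E) * (fourierT g ξ / (I * ξ)) := by
    calc (1 - E) * fourierT G ξ = fourierT G ξ - fourierT (fun t => G (t - a)) ξ := by
          rw [fourierT_comp_sub_right]; ring
      _ = fourierT (fun t => G t - G (t - a)) ξ := by
          simp only [fourierT, mul_sub]
          exact (integral_sub (integrable_cexp_neg_I_mul_mul hG aemeasurable_id' ξ)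
            (integrable_cexp_neg_I_mul_mul (hG.comp_sub_right a) aemeasurable_id' ξ)).symm
      _ = fourierT (fun t => ∫ s in Ioc 0 a, g (t - s)) ξ := by
          simp only [G, setIntegral_Iic_sub_setIntegral_Iic_sub hg _ ha]
      _ = (1 - E) * (fourierT g ξ / (I * ξ)) := by
          rw [fourierT_integral_comp_sub hg, setIntegral_Ioc_cexp_neg_I_mul hξ ha]; ring
  exact mul_left_cancel₀ (sub_ne_zero.2 hE.symm) key

theorem stmt_5 (f : ℝ → ℂ) (hf : Integrable f) (w₀ : ℝ)
    (f₁ : ℝ → ℂ)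
    (hf₁ : f₁ = fun t : ℝ => Complex.exp (Complex.I * w₀ * t) *
      ∫ x in Set.Iic t, f x * Complex.exp (-(Complex.I * w₀ * x)))
    (hint : Integrable f₁) :
    ∀ w : ℝ, w ≠ w₀ →
      fourierT f₁ w = fourierT f w / (Complex.I * ((w : ℂ) - w₀)) := by
  intro w hw
  have hg : Integrable fun x => f x * exp (-(I * w₀ * x)) := by
    simpa only [mul_comm] using integrable_cexp_neg_I_mul_mul hf aemeasurable_id' w₀
  have hG : Integrable fun t => ∫ x in Iic t, f x * exp (-(I * w₀ * x)) := by
    refine (integrable_cexp_neg_I_mul_mul hint aemeasurable_id' w₀).congr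
      (Eventually.of_forall fun t => ?_)
    simp only [hf₁, ← mul_assoc, ← Complex.exp_add, neg_add_cancel, Complex.exp_zero, one_mul]
  rw [hf₁, fourierT_cexp_I_mul_mul, fourierT_setIntegral_Iic hg hG (sub_ne_zero.2 hw),
    fourierT_mul_cexp_neg_I_mul, sub_add_cancel, ofReal_sub]
end
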